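/- arXiv:2210.04003 — 3 statements merged into one kernel-verified Lean document; each statement's English description precedes it below -/
import Mathlib

section
/- Let Γ be a divisible ordered abelian group, D ⊆ Γ^n, and let g, f_1,…,f_m : D → Γ be functions such that each f_i is the restriction of a Q-affine function on Γ^n and g is a w-combination of f_1,…,f_m (i.e., for every x ∈ D there is i with g(x) = f_i(x)). Suppose that for any x, y ∈ D there exists i ∈ {1,…,m} with f_i(x) ≤ g(x) and g(y) ≤ f_i(y). Then there is a collection S of subsets of {1,…,m} such that g(x) = min_{X ∈ S} max_{i ∈ X} f_i(x) for all x ∈ D. -/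
/-!
For `y ∈ D` let `X_y = {i | f_i(y) ≤ g(y)}`, which is nonempty because `g` is a
w-combination. The hypothesis applied to the pair `(y, x)` yields some `i ∈ X_y`
with `g(x) ≤ f_i(x)`, so `max_{i ∈ X_y} f_i(x) ≥ g(x)` for every `y`, while
`max_{i ∈ X_x} f_i(x) ≤ g(x)` by the definition of `X_x`. Hence
`S = {X_y | y ∈ D}` works.
-/

/-- `minMax S hS h f` is `min_{X ∈ S} max_{i ∈ X} f i`, for a nonempty finite
collection `S` of nonempty subsets `X ⊆ {1,…,m}`. -/
noncomputable def minMax {Γ : Type*} [LinearOrder Γ] {m : ℕ}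
    (S : Finset (Finset (Fin m))) (hS : S.Nonempty) (h : ∀ X ∈ S, X.Nonempty)
    (f : Fin m → Γ) : Γ :=
  S.attach.inf' (Finset.attach_nonempty_iff.mpr hS) (fun X => X.1.sup' (h X.1 X.2) f)

theorem minMax_eq_of_le_of_exists_le {Γ : Type*} [LinearOrder Γ] {m : ℕ}
    {S : Finset (Finset (Fin m))} (hS : S.Nonempty) (h : ∀ X ∈ S, X.Nonempty)
    {f : Fin m → Γ} {a : Γ} (hle : ∀ X (hX : X ∈ S), a ≤ X.sup' (h X hX) f)
    {X₀ : Finset (Fin m)} (hX₀ : X₀ ∈ S) (hge : X₀.sup' (h X₀ hX₀) f ≤ a) :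
    minMax S hS h f = a :=
  le_antisymm ((Finset.inf'_le _ (Finset.mem_attach _ ⟨X₀, hX₀⟩)).trans hge)
    (Finset.le_inf' _ _ fun X _ => hle X.1 X.2)

namespace Finset

open Classical in
noncomputable def lowerIndices {ι α Γ : Type*} [Fintype ι] [LinearOrder Γ]
    (f : ι → α → Γ) (g : α → Γ) (y : α) : Finset ι :=
  univ.filter fun i => f i y ≤ g y

variable {ι α Γ : Type*} [Fintype ι] [LinearOrder Γ] {f : ι → α → Γ} {g : α → Γ}

theorem mem_lowerIndices {y : α} {i : ι} : i ∈ lowerIndices f g y ↔ f i y ≤ g y := by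
  classical
  simp [lowerIndices]

theorem lowerIndices_nonempty {y : α} {i : ι} (hi : g y = f i y) :
    (lowerIndices f g y).Nonempty :=
  ⟨i, mem_lowerIndices.mpr hi.ge⟩

theorem sup'_lowerIndices_le {x : α} (hne : (lowerIndices f g x).Nonempty) :
    (lowerIndices f g x).sup' hne (f · x) ≤ g x :=
  sup'_le _ _ fun _ hi => mem_lowerIndices.mp hi

theorem le_sup'_lowerIndices {x y : α} (hne : (lowerIndices f g y).Nonempty)
    (hsep : ∃ i, f i y ≤ g y ∧ g x ≤ f i x) :
    g x ≤ (lowerIndices f g y).sup' hne (f · x) :=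
  let ⟨_, hiy, hix⟩ := hsep
  le_sup'_of_le _ (mem_lowerIndices.mpr hiy) hix

open Classical in
noncomputable def lowerIndexSets (f : ι → α → Γ) (g : α → Γ) (D : Set α) :
    Finset (Finset ι) :=
  univ.filter fun X => ∃ y ∈ D, lowerIndices f g y = X

theorem mem_lowerIndexSets {D : Set α} {X : Finset ι} :
    X ∈ lowerIndexSets f g D ↔ ∃ y ∈ D, lowerIndices f g y = X := by
  classical
  simp [lowerIndexSets]

end Finset

open Finset in
theorem stmt_2_general {Γ : Type*} [LinearOrder Γ] {n m : ℕ}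
    (D : Set (Fin n → Γ)) (g : (Fin n → Γ) → Γ) (f : Fin m → (Fin n → Γ) → Γ)
    (hw : ∀ x ∈ D, ∃ i, g x = f i x)
    (hsep : ∀ x ∈ D, ∀ y ∈ D, ∃ i, f i x ≤ g x ∧ g y ≤ f i y) :
    ∃ (S : Finset (Finset (Fin m))) (h : ∀ X ∈ S, X.Nonempty),
      ∀ x ∈ D, ∃ hS : S.Nonempty, g x = minMax S hS h (fun i => f i x) := by
  have hne : ∀ X ∈ lowerIndexSets f g D, X.Nonempty := by
    intro X hX
    obtain ⟨y, hy, rfl⟩ := mem_lowerIndexSets.mp hX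
    obtain ⟨i, hi⟩ := hw y hy
    exact lowerIndices_nonempty hi
  refine ⟨lowerIndexSets f g D, hne, fun x hx => ?_⟩
  have hx_mem : lowerIndices f g x ∈ lowerIndexSets f g D := mem_lowerIndexSets.mpr ⟨x, hx, rfl⟩
  refine ⟨⟨_, hx_mem⟩, (minMax_eq_of_le_of_exists_le _ hne ?_ hx_mem
    (sup'_lowerIndices_le _)).symm⟩
  intro X hX
  obtain ⟨y, hy, rfl⟩ := mem_lowerIndexSets.mp hX
  exact le_sup'_lowerIndices _ (hsep y hy x hx)

/-- Let `Γ` be a divisible ordered abelian group, `D ⊆ Γ^n`, and let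
`g, f_1, …, f_m : D → Γ` with each `f_i` the restriction of a ℚ-affine function and
`g` a w-combination of the `f_i`.  If for all `x, y ∈ D` there is `i` with
`f_i(x) ≤ g(x)` and `g(y) ≤ f_i(y)`, then there is a collection `S` of subsets of
`{1,…,m}` with `g = min_{X ∈ S} max_{i ∈ X} f_i` on `D`. -/
theorem stmt_2 {Γ : Type*} [AddCommGroup Γ] [LinearOrder Γ] [IsOrderedAddMonoid Γ] [Module ℚ Γ] {n m : ℕ}
    (D : Set (Fin n → Γ)) (g : (Fin n → Γ) → Γ) (f : Fin m → (Fin n → Γ) → Γ)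
    (haff : ∀ i, ∃ (q : Fin n → ℚ) (c : Γ), ∀ x, f i x = (∑ j, q j • x j) + c)
    (hw : ∀ x ∈ D, ∃ i, g x = f i x)
    (hsep : ∀ x ∈ D, ∀ y ∈ D, ∃ i, f i x ≤ g x ∧ g y ≤ f i y) :
    ∃ (S : Finset (Finset (Fin m))) (h : ∀ X ∈ S, X.Nonempty),
      ∀ x ∈ D, ∃ hS : S.Nonempty, g x = minMax S hS h (fun i => f i x) :=
  stmt_2_general D g f hw hsep
end

section
/- Let Γ be a model of DOAG, D ⊆ Γ^n an A-definable set, and f : D → Γ an A-definable Lipschitz function. Suppose f is a w-combination of the restrictions to D of finitely many Q-affine A-definable functions f_1,…,f_m. Then f admits a unique continuous extension f̄ to the topological closure D̄ of D; moreover f̄ is Lipschitz (with the same constant bound up to the slopes of the f_i), and f̄ is a w-combination of the restrictions of f_1,…,f_m to D̄. -/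
/-!
Let `S i ⊆ D` be the set where `f` agrees with the affine function `F i`. Each `F i` is
continuous, and the Lipschitz inequality `|F i x - F j y| ≤ M • b` for `x ∈ S i`, `y ∈ S j`
with `|x - y| ≤ b` passes to `x ∈ closure (S i)`, `y ∈ closure (S j)`: it is a closed condition
once `|x - y| ≤ b` is relaxed to `|x - y| < b + ε`. With `x = y`, `b = 0` it shows that the
`F i` agree where the closures meet, so they glue to `fbar` on `closure D = ⋃ i, closure (S i)`;
the same inequality is the Lipschitz bound, continuity holds piecewise on this finite closed
cover, and uniqueness is density of `D` in its closure.
-/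

/-- A basic cell in `Γ^n`: the solution set of a finite system of ℚ-affine
(strict or non-strict) inequalities `∑ q_j x_j < c` / `∑ q_j x_j ≤ c`. -/
def QAffineCell {Γ : Type*} [AddCommGroup Γ] [LinearOrder Γ] [IsOrderedAddMonoid Γ] [Module ℚ Γ] {n : ℕ}
    (s : Finset ((Fin n → ℚ) × Γ × Bool)) : Set (Fin n → Γ) :=
  {x | ∀ p ∈ s, if p.2.2 = true then (∑ j, p.1 j • x j) < p.2.1
       else (∑ j, p.1 j • x j) ≤ p.2.1}

/-- A (with parameters) definable subset of `Γ^n` in DOAG: a finite union of cells. -/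
def Semilinear {Γ : Type*} [AddCommGroup Γ] [LinearOrder Γ] [IsOrderedAddMonoid Γ] [Module ℚ Γ] {n : ℕ}
    (D : Set (Fin n → Γ)) : Prop :=
  ∃ (k : ℕ) (c : Fin k → Finset ((Fin n → ℚ) × Γ × Bool)), D = ⋃ i, QAffineCell (c i)

/-- `f` is Lipschitz with constant `M ∈ ℕ` on `D` (w.r.t. `|x| = max_i |x_i|`). -/
def LipOn {Γ : Type*} [AddCommGroup Γ] [LinearOrder Γ] [IsOrderedAddMonoid Γ] {n : ℕ}
    (M : ℕ) (D : Set (Fin n → Γ)) (f : (Fin n → Γ) → Γ) : Prop :=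
  ∀ x ∈ D, ∀ y ∈ D, ∀ b : Γ, 0 ≤ b → (∀ i, |x i - y i| ≤ b) → |f x - f y| ≤ M • b

lemma eq_iUnion_sep_eq {ι α β : Type*} {D : Set α} {f : α → β} {F : ι → α → β}
    (hw : ∀ x ∈ D, ∃ i, f x = F i x) : D = ⋃ i, {x ∈ D | f x = F i x} :=
  Set.Subset.antisymm (fun x hx => Set.mem_iUnion.2 ((hw x hx).imp fun _ hi => ⟨hx, hi⟩))
    (Set.iUnion_subset fun _ _ hx => hx.1)

lemma exists_eqOn_of_eqOn_inter {ι α β : Type*} [Nonempty β] {F : ι → α → β} {C : ι → Set α}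
    (h : ∀ i j, Set.EqOn (F i) (F j) (C i ∩ C j)) : ∃ g : α → β, ∀ i, Set.EqOn g (F i) (C i) := by
  classical
  refine ⟨fun x => if hx : ∃ i, x ∈ C i then F hx.choose x else Classical.arbitrary β,
    fun i x hxi => ?_⟩
  have hx : ∃ i, x ∈ C i := ⟨i, hxi⟩
  simp only [dif_pos hx]
  exact h _ _ ⟨hx.choose_spec, hxi⟩

section RatModule

variable {Γ : Type*} [AddCommGroup Γ] [LinearOrder Γ] [IsOrderedAddMonoid Γ] [Module ℚ Γ]

lemma qsmul_nonneg {q : ℚ} (hq : 0 ≤ q) {a : Γ} (ha : 0 ≤ a) : 0 ≤ q • a := by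
  have hden : (q.den : ℚ) ≠ 0 := Nat.cast_ne_zero.2 q.den_nz
  have hdiv : 0 ≤ (q.den : ℚ)⁻¹ • a := by
    refine (nsmul_nonneg_iff q.den_nz).1 ?_
    rwa [← Nat.cast_smul_eq_nsmul ℚ, smul_smul, mul_inv_cancel₀ hden, one_smul]
  have hq' : q • a = q.num • ((q.den : ℚ)⁻¹ • a) := by
    rw [← Int.cast_smul_eq_zsmul ℚ, smul_smul, ← div_eq_mul_inv, Rat.num_div_den]
  rw [hq']
  exact zsmul_nonneg hdiv (Rat.num_nonneg.2 hq)

instance : IsOrderedModule ℚ Γ := .of_smul_nonneg fun _ hq _ ha => qsmul_nonneg hq ha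

instance : PosSMulStrictMono ℚ Γ := PosSMulMono.toPosSMulStrictMono

instance : DenselyOrdered Γ where
  dense a b hab := by
    refine ⟨(2⁻¹ : ℚ) • (a + b), ?_, ?_⟩
    · calc a = (2⁻¹ : ℚ) • (a + a) := by rw [← two_smul ℚ, smul_smul]; norm_num
        _ < (2⁻¹ : ℚ) • (a + b) := smul_lt_smul_of_pos_left (by gcongr) (by norm_num)
    · calc (2⁻¹ : ℚ) • (a + b) < (2⁻¹ : ℚ) • (b + b) :=
            smul_lt_smul_of_pos_left (by gcongr) (by norm_num)
        _ = b := by rw [← two_smul ℚ, smul_smul]; norm_num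

lemma exists_pos_nsmul_le (M : ℕ) {η : Γ} (hη : 0 < η) : ∃ ε : Γ, 0 < ε ∧ M • ε ≤ η := by
  refine ⟨((M : ℚ) + 1)⁻¹ • η, smul_pos (by positivity) hη, ?_⟩
  rw [← Nat.cast_smul_eq_nsmul ℚ, smul_smul]
  refine smul_le_of_le_one_left hη.le ?_
  rw [← div_eq_mul_inv, div_le_one (by positivity)]
  linarith

lemma le_of_forall_pos_le_add_nsmul {a c : Γ} (M : ℕ) (h : ∀ ε : Γ, 0 < ε → a ≤ c + M • ε) :
    a ≤ c :=
  le_of_forall_pos_le_add fun η hη => by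
    obtain ⟨ε, hε, hMε⟩ := exists_pos_nsmul_le M hη
    exact (h ε hε).trans (by gcongr)

variable [TopologicalSpace Γ] [OrderTopology Γ] {n : ℕ}

lemma continuous_qsmul (q : ℚ) : Continuous fun x : Γ => q • x := by
  have hpos : ∀ r : ℚ, 0 < r → Continuous fun x : Γ => r • x := fun r hr =>
    Monotone.continuous_of_surjective (fun _ _ h => smul_le_smul_of_nonneg_left h hr.le)
      fun y => ⟨r⁻¹ • y, by rw [smul_smul, mul_inv_cancel₀ hr.ne', one_smul]⟩
  rcases lt_trichotomy q 0 with hq | rfl | hq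
  · convert (hpos (-q) (neg_pos.2 hq)).neg using 2 with x
    rw [Pi.neg_apply, neg_smul, neg_neg]
  · simpa only [zero_smul] using continuous_const
  · exact hpos q hq

lemma continuous_qAffine (q : Fin n → ℚ) (c : Γ) :
    Continuous fun x : Fin n → Γ => (∑ j, q j • x j) + c :=
  (continuous_finsetSum _ fun j _ => (continuous_qsmul (q j)).comp (continuous_apply j)).add
    continuous_const

lemma abs_sub_le_nsmul_of_mem_closure {M : ℕ} {S T : Set (Fin n → Γ)}
    {u v : (Fin n → Γ) → Γ} (hu : Continuous u) (hv : Continuous v)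
    (h : ∀ x ∈ S, ∀ y ∈ T, ∀ b : Γ, 0 ≤ b → (∀ k, |x k - y k| ≤ b) → |u x - v y| ≤ M • b) :
    ∀ x ∈ closure S, ∀ y ∈ closure T, ∀ b : Γ, 0 ≤ b → (∀ k, |x k - y k| ≤ b) →
      |u x - v y| ≤ M • b := by
  intro x hx y hy b hb hxy
  refine le_of_forall_pos_le_add_nsmul M fun ε hε => ?_
  let P : Set ((Fin n → Γ) × (Fin n → Γ)) :=
    {p | (∀ k, |p.1 k - p.2 k| < b + ε) → |u p.1 - v p.2| ≤ M • (b + ε)}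
  have hP : IsClosed P := by
    refine isClosed_imp ?_ (isClosed_le (by fun_prop) continuous_const)
    simp only [Set.ofPred_forall]
    exact isOpen_iInter_of_finite fun k => isOpen_lt (by fun_prop) continuous_const
  have hST : S ×ˢ T ⊆ P := fun p hp hclose =>
    h p.1 hp.1 p.2 hp.2 (b + ε) (add_nonneg hb hε.le) fun k => (hclose k).le
  have hxyP : (x, y) ∈ P := by
    refine closure_minimal hST hP ?_
    rw [closure_prod_eq]
    exact ⟨hx, hy⟩
  rw [← smul_add]
  exact hxyP fun k => (hxy k).trans_lt (lt_add_of_pos_right b hε)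

end RatModule

theorem stmt_8_general {Γ : Type*} [AddCommGroup Γ] [LinearOrder Γ] [IsOrderedAddMonoid Γ] [Module ℚ Γ]
    [TopologicalSpace Γ] [OrderTopology Γ] {n m : ℕ}
    (D : Set (Fin n → Γ))
    (f : (Fin n → Γ) → Γ) (M : ℕ) (hLip : LipOn M D f)
    (q : Fin m → Fin n → ℚ) (c : Fin m → Γ)
    (hw : ∀ x ∈ D, ∃ i, f x = (∑ j, q i j • x j) + c i) :
    ∃ fbar : (Fin n → Γ) → Γ,
      (∀ x ∈ D, fbar x = f x) ∧
      ContinuousOn fbar (closure D) ∧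
      (∃ M' : ℕ, LipOn M' (closure D) fbar) ∧
      (∀ x ∈ closure D, ∃ i, fbar x = (∑ j, q i j • x j) + c i) ∧
      (∀ h : (Fin n → Γ) → Γ, ContinuousOn h (closure D) →
        (∀ x ∈ D, h x = f x) → ∀ x ∈ closure D, h x = fbar x) := by
  set F : Fin m → (Fin n → Γ) → Γ := fun i x => (∑ j, q i j • x j) + c i
  set S : Fin m → Set (Fin n → Γ) := fun i => {x ∈ D | f x = F i x}
  have hD : D = ⋃ i, S i := eq_iUnion_sep_eq hw
  have hcover : closure D = ⋃ i, closure (S i) := by rw [hD, closure_iUnion_of_finite]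
  have hLipF : ∀ i j, ∀ x ∈ closure (S i), ∀ y ∈ closure (S j), ∀ b : Γ, 0 ≤ b →
      (∀ k, |x k - y k| ≤ b) → |F i x - F j y| ≤ M • b := fun i j =>
    abs_sub_le_nsmul_of_mem_closure (continuous_qAffine _ _) (continuous_qAffine _ _)
      fun x hx y hy => hx.2 ▸ hy.2 ▸ hLip x hx.1 y hy.1
  obtain ⟨fbar, hfbar⟩ := exists_eqOn_of_eqOn_inter (F := F) (C := fun i => closure (S i))
    fun i j x hx => by
      simpa only [smul_zero, abs_nonpos_iff, sub_eq_zero] using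
        hLipF i j x hx.1 x hx.2 0 le_rfl fun k => by rw [sub_self, abs_zero]
  have hext : ∀ x ∈ D, fbar x = f x := fun x hx => by
    obtain ⟨i, hi⟩ := Set.mem_iUnion.1 (hD ▸ hx)
    exact (hfbar i (subset_closure hi)).trans hi.2.symm
  have hcont : ContinuousOn fbar (closure D) := hcover ▸
    (locallyFinite_of_finite _).continuousOn_iUnion (fun _ => isClosed_closure)
      fun i => (continuous_qAffine _ _).continuousOn.congr (hfbar i)
  refine ⟨fbar, hext, hcont, ⟨M, fun x hx y hy => ?_⟩, fun x hx => ?_, fun h hh hhf => ?_⟩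
  · obtain ⟨i, hi⟩ := Set.mem_iUnion.1 (hcover ▸ hx)
    obtain ⟨j, hj⟩ := Set.mem_iUnion.1 (hcover ▸ hy)
    rw [hfbar i hi, hfbar j hj]
    exact hLipF i j x hi y hj
  · obtain ⟨i, hi⟩ := Set.mem_iUnion.1 (hcover ▸ hx)
    exact ⟨i, hfbar i hi⟩
  · exact Set.EqOn.of_subset_closure (fun x hx => (hhf x hx).trans (hext x hx).symm) hh hcont
      subset_closure subset_rfl

/-- Let `Γ ⊨ DOAG`, `D ⊆ Γ^n` a definable set, and `f : D → Γ` a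
definable Lipschitz function which is a w-combination of the restrictions of
finitely many ℚ-affine functions `f_i = ∑_j q_{ij} x_j + c_i`.  Then `f` has a
unique continuous extension `f̄` to the closure of `D`; moreover `f̄` is Lipschitz
and is a w-combination of the restrictions of the `f_i` to the closure. -/
theorem stmt_8 {Γ : Type*} [AddCommGroup Γ] [LinearOrder Γ] [IsOrderedAddMonoid Γ] [Module ℚ Γ]
    [TopologicalSpace Γ] [OrderTopology Γ] {n m : ℕ}
    (D : Set (Fin n → Γ)) (hD : Semilinear D)
    (f : (Fin n → Γ) → Γ) (M : ℕ) (hLip : LipOn M D f)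
    (q : Fin m → Fin n → ℚ) (c : Fin m → Γ)
    (hw : ∀ x ∈ D, ∃ i, f x = (∑ j, q i j • x j) + c i) :
    ∃ fbar : (Fin n → Γ) → Γ,
      (∀ x ∈ D, fbar x = f x) ∧
      ContinuousOn fbar (closure D) ∧
      (∃ M' : ℕ, LipOn M' (closure D) fbar) ∧
      (∀ x ∈ closure D, ∃ i, fbar x = (∑ j, q i j • x j) + c i) ∧
      (∀ h : (Fin n → Γ) → Γ, ContinuousOn h (closure D) →
        (∀ x ∈ D, h x = f x) → ∀ x ∈ closure D, h x = fbar x) :=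
  stmt_8_general D f M hLip q c hw
end

section
/- Let Γ be a divisible ordered abelian group, M ⊆ Γ a divisible subgroup, and ρ ∈ Γ with ρ > m for all m ∈ M. Suppose γ ∈ M ⊕ Q·ρ (the subgroup generated by M and all rational multiples of ρ). Then there exist a positive integer m, an integer k, and β ∈ M such that γ = (k/m)·ρ + β, and for a Z-affine function with such constants restricted to the box [−ρ, ρ]^n, replacing ρ by any sufficiently large element ν of M yields (by o-minimality of DOAG) the same identities on [−m·ν, m·ν]^n. In particular: if an identity h = t(x_1,…,x_n, k·ν + β) between definable functions over M holds for ν = ρ/m, and all data except ν are M-definable, then there exists ν_0 ∈ M such that the identity holds for all ν > ν_0 in M. -/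
/-- Terms in the operations `+`, `−`, `min`, `max`, variables and constants. -/
inductive MMTerm (Γ : Type*) (n : ℕ) : Type _ where
  | const : Γ → MMTerm Γ n
  | var : Fin n → MMTerm Γ n
  | add : MMTerm Γ n → MMTerm Γ n → MMTerm Γ n
  | neg : MMTerm Γ n → MMTerm Γ n
  | min : MMTerm Γ n → MMTerm Γ n → MMTerm Γ n
  | max : MMTerm Γ n → MMTerm Γ n → MMTerm Γ n

def MMTerm.eval {Γ : Type*} [LinearOrder Γ] [AddCommGroup Γ] {n : ℕ} :
    MMTerm Γ n → (Fin n → Γ) → Γ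
  | .const c, _ => c
  | .var i, x => x i
  | .add t s, x => t.eval x + s.eval x
  | .neg t, x => -t.eval x
  | .min t s, x => Min.min (t.eval x) (s.eval x)
  | .max t s, x => Max.max (t.eval x) (s.eval x)

/-- All constants of the term lie in `S`. -/
def MMTerm.ConstsIn {Γ : Type*} {n : ℕ} (S : Set Γ) : MMTerm Γ n → Prop
  | .const c => c ∈ S
  | .var _ => True
  | .add t s => t.ConstsIn S ∧ s.ConstsIn S
  | .neg t => t.ConstsIn S
  | .min t s => t.ConstsIn S ∧ s.ConstsIn S
  | .max t s => t.ConstsIn S ∧ s.ConstsIn S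

/-- The cell in `Δ^n` cut out by a finite system of ℚ-affine inequalities with
constants from `Γ` transported along `f : Γ → Δ`. -/
def cellSet {Γ Δ : Type*} [AddCommGroup Δ] [LinearOrder Δ] [IsOrderedAddMonoid Δ] [Module ℚ Δ] {n : ℕ}
    (f : Γ → Δ) (s : Finset ((Fin n → ℚ) × Γ × Bool)) : Set (Fin n → Δ) :=
  {x | ∀ p ∈ s, if p.2.2 = true then (∑ j, p.1 j • x j) < f p.2.1
       else (∑ j, p.1 j • x j) ≤ f p.2.1}

/-!
Over a divisible ordered abelian group a term in `+, −, min, max` is piecewise affine, with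
rational coefficients and constants in `M`, on finitely many pieces that are themselves finite
unions of polyhedra defined over `M`. Hence the set of `(x, ν)` at which the identity fails
inside the box is such a finite union, and Fourier–Motzkin elimination of `x` leaves a finite
union of polyhedra in the single variable `ν`, all defined over `M`. Each of them misses `ρ / m`,
so one of its constraints fails there; a lower bound on `ν` cannot fail at `ρ / m`, because the
bound lies in `M`. So every piece is bounded above by an element of `M`, and the maximum of
these bounds is the required `ν₀`.
-/

open Set

section OrderedRatModule

variable {Γ : Type*} [AddCommGroup Γ] [LinearOrder Γ] [IsOrderedAddMonoid Γ] [Module ℚ Γ]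

instance inst_s15 : PosSMulStrictMono ℚ Γ where
  smul_lt_smul_of_pos_left q hq a b hab := by
    rw [← sub_pos, ← smul_sub]
    have hnum : 0 < q.num • (b - a) := zsmul_pos (sub_pos.2 hab) (Rat.num_pos.2 hq)
    rw [← Int.cast_smul_eq_zsmul ℚ, ← q.den_mul_eq_num, mul_smul,
      Nat.cast_smul_eq_nsmul] at hnum
    exact (nsmul_pos_iff q.den_nz).1 hnum

instance inst_s15_2 : DenselyOrdered Γ where
  dense a b hab := ⟨(2⁻¹ : ℚ) • (a + b), by
    have h2 : (2⁻¹ : ℚ) • (a + a) = a := by module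
    have h2' : (2⁻¹ : ℚ) • (b + b) = b := by module
    constructor
    · conv_lhs => rw [← h2]
      exact smul_lt_smul_of_pos_left (add_lt_add_right hab a) (by norm_num)
    · conv_rhs => rw [← h2']
      exact smul_lt_smul_of_pos_left (add_lt_add_left hab b) (by norm_num)⟩

end OrderedRatModule

section LeOrLt

variable {α : Type*}

def leOrLt [Preorder α] (s : Bool) (a b : α) : Prop := if s = true then a < b else a ≤ b

variable [LinearOrder α] {s s' : Bool} {a b c : α}

@[simp] theorem leOrLt_true : leOrLt true a b ↔ a < b := Iff.rfl

@[simp] theorem leOrLt_false : leOrLt false a b ↔ a ≤ b := Iff.rfl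

theorem leOrLt.le (h : leOrLt s a b) : a ≤ b := by
  cases s
  exacts [h, le_of_lt h]

theorem leOrLt_of_lt (h : a < b) : leOrLt s a b := by
  cases s
  exacts [le_of_lt h, h]

theorem leOrLt_or_iff : leOrLt (s || s') a b ↔ leOrLt s a b ∧ leOrLt s' a b := by
  cases s <;> cases s' <;> simp +contextual [leOrLt, iff_def, le_of_lt]

theorem leOrLt.trans (h₁ : leOrLt s a b) (h₂ : leOrLt s' b c) : leOrLt (s || s') a c := by
  cases s <;> cases s' <;> simp only [leOrLt, Bool.or_true, Bool.or_false, Bool.false_eq_true,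
    if_true, if_false] at h₁ h₂ ⊢
  exacts [h₁.trans h₂, h₁.trans_lt h₂, h₁.trans_le h₂, h₁.trans h₂]

theorem leOrLt_sub_zero {G : Type*} [AddCommGroup G] [LinearOrder G] [IsOrderedAddMonoid G]
    {a b : G} : leOrLt s (a - b) 0 ↔ leOrLt s a b := by
  cases s
  exacts [sub_nonpos, sub_neg]

theorem leOrLt_zero_iff_of_smul_eq {G : Type*} [AddCommGroup G] [LinearOrder G]
    [IsOrderedAddMonoid G] [Module ℚ G] {q : ℚ} (hq : 0 < q) {a b : G} (h : q • a = b) :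
    leOrLt s b 0 ↔ leOrLt s a 0 := by
  subst h
  cases s
  exacts [smul_nonpos_iff_nonpos_of_pos_left hq, smul_neg_iff_of_pos_left hq]

theorem exists_leOrLt_between [DenselyOrdered α] [NoMinOrder α] [NoMaxOrder α] [Nonempty α]
    {ι : Type*} {L U : Set ι} (hL : L.Finite) (hU : U.Finite) (b : ι → α) (s : ι → Bool)
    (h : ∀ i ∈ L, ∀ j ∈ U, leOrLt (s i || s j) (b i) (b j)) :
    ∃ t, (∀ i ∈ L, leOrLt (s i) (b i) t) ∧ ∀ j ∈ U, leOrLt (s j) t (b j) := by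
  rcases L.eq_empty_or_nonempty with rfl | hLne
  · obtain ⟨a, ha⟩ := (hU.image b).bddBelow
    obtain ⟨t, ht⟩ := exists_lt a
    exact ⟨t, by simp, fun j hj => leOrLt_of_lt (ht.trans_le (ha (mem_image_of_mem b hj)))⟩
  rcases U.eq_empty_or_nonempty with rfl | hUne
  · obtain ⟨a, ha⟩ := (hL.image b).bddAbove
    obtain ⟨t, ht⟩ := exists_gt a
    exact ⟨t, fun i hi => leOrLt_of_lt ((ha (mem_image_of_mem b hi)).trans_lt ht), by simp⟩
  obtain ⟨i₀, hi₀, hmax⟩ := exists_max_image L b hL hLne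
  obtain ⟨j₀, hj₀, hmin⟩ := exists_min_image U b hU hUne
  rcases (h i₀ hi₀ j₀ hj₀).le.lt_or_eq with hlt | heq
  · obtain ⟨t, h₁, h₂⟩ := exists_between hlt
    exact ⟨t, fun i hi => leOrLt_of_lt ((hmax i hi).trans_lt h₁),
      fun j hj => leOrLt_of_lt (h₂.trans_le (hmin j hj))⟩
  · refine ⟨b i₀, fun i hi => ?_, fun j hj => (leOrLt_or_iff.1 (h i₀ hi₀ j hj)).2⟩
    rw [heq]
    exact (leOrLt_or_iff.1 (h i hi j₀ hj₀)).1

end LeOrLt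

section Polyhedra

variable {Γ : Type*} [AddCommGroup Γ] [Module ℚ Γ] {N : ℕ}

/-- Affine forms with rational coefficients are encoded as pairs `(a, c)`, standing for
`z ↦ ∑ j, a j • z j + c`; evaluation at a point is linear in the form. -/
def affineEval (z : Fin N → Γ) : ((Fin N → ℚ) × Γ) →ₗ[ℚ] Γ :=
  (Fintype.linearCombination ℚ z).coprod LinearMap.id

theorem affineEval_apply (z : Fin N → Γ) (A : (Fin N → ℚ) × Γ) :
    affineEval z A = ∑ j, A.1 j • z j + A.2 := by
  simp [affineEval, Fintype.linearCombination_apply]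

theorem affineEval_single (z : Fin N → Γ) (j : Fin N) (q : ℚ) (c : Γ) :
    affineEval z (Pi.single j q, c) = q • z j + c := by
  classical
  simp [affineEval, Fintype.linearCombination_apply_single]

theorem affineEval_cons (t : Γ) (y : Fin N → Γ) (A : (Fin (N + 1) → ℚ) × Γ) :
    affineEval (Fin.cons t y) A = A.1 0 • t + affineEval y (Fin.tail A.1, A.2) := by
  simp [affineEval_apply, Fin.sum_univ_succ, Fin.tail, add_assoc]

theorem affineEval_snoc (z : Fin (N + 1) → Γ) (a : Fin N → ℚ) (q : ℚ) (c : Γ) :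
    affineEval z (Fin.snoc a q, c) = affineEval (Fin.init z) (a, c) + q • z (Fin.last N) := by
  simp [affineEval_apply, Fin.sum_univ_castSucc, Fin.init]
  abel

structure Constraint (Γ : Type*) (N : ℕ) where
  form : (Fin N → ℚ) × Γ
  strict : Bool

variable [LinearOrder Γ]

def Constraint.Holds (c : Constraint Γ N) (z : Fin N → Γ) : Prop :=
  leOrLt c.strict (affineEval z c.form) 0

def solutions (C : Set (Constraint Γ N)) : Set (Fin N → Γ) := {z | ∀ c ∈ C, c.Holds z}

def IsPolyhedron (M : Submodule ℚ Γ) (S : Set (Fin N → Γ)) : Prop :=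
  ∃ C : Set (Constraint Γ N), C.Finite ∧ (∀ c ∈ C, c.form.2 ∈ M) ∧ solutions C = S

def IsSemilinear (M : Submodule ℚ Γ) (S : Set (Fin N → Γ)) : Prop :=
  ∃ Ps : Set (Set (Fin N → Γ)), Ps.Finite ∧ (∀ P ∈ Ps, IsPolyhedron M P) ∧ ⋃₀ Ps = S

variable {M : Submodule ℚ Γ} {S T : Set (Fin N → Γ)}

theorem isPolyhedron_setOf_forall {ι : Type*} [Finite ι] (c : ι → Constraint Γ N)
    (hc : ∀ i, (c i).form.2 ∈ M) : IsPolyhedron M {z | ∀ i, (c i).Holds z} :=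
  ⟨range c, finite_range c, forall_mem_range.2 hc, by ext; simp [solutions]⟩

theorem isPolyhedron_setOf_holds {c : Constraint Γ N} (hc : c.form.2 ∈ M) :
    IsPolyhedron M {z | c.Holds z} :=
  ⟨{c}, finite_singleton c, by simpa using hc, by ext; simp [solutions]⟩

theorem IsPolyhedron.inter (hS : IsPolyhedron M S) (hT : IsPolyhedron M T) :
    IsPolyhedron M (S ∩ T) := by
  obtain ⟨C, hC, hCM, rfl⟩ := hS
  obtain ⟨D, hD, hDM, rfl⟩ := hT
  refine ⟨C ∪ D, hC.union hD, fun c hc => hc.elim (hCM c) (hDM c), ?_⟩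
  ext z
  simp only [solutions, mem_union, mem_ofPred_eq, mem_inter_iff, or_imp, forall_and]

theorem IsPolyhedron.isSemilinear (hS : IsPolyhedron M S) : IsSemilinear M S :=
  ⟨{S}, finite_singleton S, by simpa using hS, sUnion_singleton S⟩

theorem isSemilinear_univ : IsSemilinear M (univ : Set (Fin N → Γ)) :=
  IsPolyhedron.isSemilinear ⟨∅, finite_empty, by simp, by simp [solutions]⟩

theorem IsSemilinear.union (hS : IsSemilinear M S) (hT : IsSemilinear M T) :
    IsSemilinear M (S ∪ T) := by
  obtain ⟨Ps, hPs, hP, rfl⟩ := hS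
  obtain ⟨Qs, hQs, hQ, rfl⟩ := hT
  exact ⟨Ps ∪ Qs, hPs.union hQs, fun P hP' => hP'.elim (hP P) (hQ P), sUnion_union Ps Qs⟩

theorem IsSemilinear.iUnion {ι : Type*} [Finite ι] {S : ι → Set (Fin N → Γ)}
    (hS : ∀ i, IsSemilinear M (S i)) : IsSemilinear M (⋃ i, S i) := by
  choose Ps hPs hP hS using hS
  refine ⟨⋃ i, Ps i, finite_iUnion hPs, fun P hP' => ?_, by simp [sUnion_iUnion, hS]⟩
  obtain ⟨i, hi⟩ := mem_iUnion.1 hP'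
  exact hP i P hi

theorem IsSemilinear.inter (hS : IsSemilinear M S) (hT : IsSemilinear M T) :
    IsSemilinear M (S ∩ T) := by
  obtain ⟨Ps, hPs, hP, rfl⟩ := hS
  obtain ⟨Qs, hQs, hQ, rfl⟩ := hT
  refine ⟨(fun p => p.1 ∩ p.2) '' Ps ×ˢ Qs, (hPs.prod hQs).image _, ?_, by
    rw [sUnion_image, sUnion_inter_sUnion]⟩
  rintro _ ⟨⟨P, Q⟩, ⟨hP', hQ'⟩, rfl⟩
  exact (hP P hP').inter (hQ Q hQ')

theorem IsSemilinear.sep_holds (hS : IsSemilinear M S) {c : Constraint Γ N} (hc : c.form.2 ∈ M) :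
    IsSemilinear M {z ∈ S | c.Holds z} :=
  hS.inter (isPolyhedron_setOf_holds hc).isSemilinear

namespace Constraint

def lead (c : Constraint Γ (N + 1)) : ℚ := c.form.1 0

def tail (c : Constraint Γ (N + 1)) : Constraint Γ N := ⟨(Fin.tail c.form.1, c.form.2), c.strict⟩

/-- The bound that `c` imposes on `t` at the point `Fin.cons t y`, when `c.lead ≠ 0`. -/
def bound (c : Constraint Γ (N + 1)) (y : Fin N → Γ) : Γ := -(c.lead⁻¹ • affineEval y c.tail.form)

variable {c : Constraint Γ (N + 1)} {t : Γ} {y : Fin N → Γ}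

theorem holds_cons_iff_of_lead_eq_zero (h : c.lead = 0) :
    c.Holds (Fin.cons t y) ↔ c.tail.Holds y := by
  rw [Holds, affineEval_cons, show c.form.1 0 = 0 from h, zero_smul, zero_add]
  rfl

end Constraint

end Polyhedra

section FourierMotzkin

variable {Γ : Type*} [AddCommGroup Γ] [LinearOrder Γ] [IsOrderedAddMonoid Γ] [Module ℚ Γ]
  {N : ℕ}

namespace Constraint

theorem holds_sub_iff {A B : (Fin N → ℚ) × Γ} {s : Bool} {z : Fin N → Γ} :
    (⟨A - B, s⟩ : Constraint Γ N).Holds z ↔ leOrLt s (affineEval z A) (affineEval z B) := by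
  rw [Holds, map_sub, leOrLt_sub_zero]

variable {c lo up : Constraint Γ (N + 1)} {t : Γ} {y : Fin N → Γ}

theorem holds_cons_iff_of_lead_pos (h : 0 < c.lead) :
    c.Holds (Fin.cons t y) ↔ leOrLt c.strict t (c.bound y) := by
  rw [← leOrLt_sub_zero, Holds, affineEval_cons]
  refine leOrLt_zero_iff_of_smul_eq h ?_
  have : c.form.1 0 ≠ 0 := h.ne'
  simp only [bound, lead, tail]
  match_scalars <;> field_simp

theorem holds_cons_iff_of_lead_neg (h : c.lead < 0) :
    c.Holds (Fin.cons t y) ↔ leOrLt c.strict (c.bound y) t := by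
  rw [← leOrLt_sub_zero, Holds, affineEval_cons]
  refine leOrLt_zero_iff_of_smul_eq (neg_pos.2 h) ?_
  have : c.form.1 0 ≠ 0 := h.ne
  simp only [bound, lead, tail]
  match_scalars <;> field_simp

/-- The combination of a lower bound `lo` and an upper bound `up` on the first coordinate
in which that coordinate cancels. -/
def resolvent (lo up : Constraint Γ (N + 1)) : Constraint Γ N :=
  ⟨up.lead • lo.tail.form + (-lo.lead) • up.tail.form, lo.strict || up.strict⟩

theorem resolvent_holds_iff (hlo : lo.lead < 0) (hup : 0 < up.lead) :
    (resolvent lo up).Holds y ↔ leOrLt (lo.strict || up.strict) (lo.bound y) (up.bound y) := by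
  rw [← leOrLt_sub_zero, Holds, resolvent, map_add, map_smul, map_smul]
  refine leOrLt_zero_iff_of_smul_eq (mul_pos (neg_pos.2 hlo) hup) ?_
  have := hlo.ne
  have := hup.ne'
  simp only [bound]
  match_scalars <;> field_simp

end Constraint

open Constraint

def eliminateFirst (C : Set (Constraint Γ (N + 1))) : Set (Constraint Γ N) :=
  tail '' {c ∈ C | c.lead = 0} ∪ image2 resolvent {c ∈ C | c.lead < 0} {c ∈ C | 0 < c.lead}

variable [Nontrivial Γ]

theorem solutions_eliminateFirst {C : Set (Constraint Γ (N + 1))} (hC : C.Finite) :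
    solutions (eliminateFirst C) = Fin.tail '' solutions C := by
  ext y
  constructor
  · intro hy
    obtain ⟨t, hlo, hup⟩ := exists_leOrLt_between (hC.subset (sep_subset _ _))
      (hC.subset (sep_subset _ _)) (bound · y) strict fun lo hlo up hup =>
        (resolvent_holds_iff hlo.2 hup.2).1 (hy _ (Or.inr (mem_image2_of_mem hlo hup)))
    refine ⟨Fin.cons t y, fun c hc => ?_, by simp⟩
    rcases lt_trichotomy c.lead 0 with h | h | h
    · exact (holds_cons_iff_of_lead_neg h).2 (hlo c ⟨hc, h⟩)
    · exact (holds_cons_iff_of_lead_eq_zero h).2 (hy _ (Or.inl (mem_image_of_mem _ ⟨hc, h⟩)))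
    · exact (holds_cons_iff_of_lead_pos h).2 (hup c ⟨hc, h⟩)
  · rintro ⟨z, hz, rfl⟩ _ (⟨c, ⟨hc, h⟩, rfl⟩ | ⟨lo, ⟨hlo, hlo'⟩, up, ⟨hup, hup'⟩, rfl⟩)
    all_goals rw [← Fin.cons_self_tail z] at hz
    · exact (holds_cons_iff_of_lead_eq_zero h).1 (hz c hc)
    · exact (resolvent_holds_iff hlo' hup').2 <|
        ((holds_cons_iff_of_lead_neg hlo').1 (hz lo hlo)).trans
          ((holds_cons_iff_of_lead_pos hup').1 (hz up hup))

variable {M : Submodule ℚ Γ}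

theorem IsPolyhedron.image_tail {S : Set (Fin (N + 1) → Γ)} (hS : IsPolyhedron M S) :
    IsPolyhedron M (Fin.tail '' S) := by
  obtain ⟨C, hC, hCM, rfl⟩ := hS
  refine ⟨eliminateFirst C, ((hC.sep _).image _).union ((hC.sep _).image2 _ (hC.sep _)), ?_,
    solutions_eliminateFirst hC⟩
  rintro _ (⟨c, ⟨hc, -⟩, rfl⟩ | ⟨lo, ⟨hlo, -⟩, up, ⟨hup, -⟩, rfl⟩)
  · exact hCM c hc
  · exact M.add_mem (M.smul_mem _ (hCM lo hlo)) (M.smul_mem _ (hCM up hup))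

theorem IsSemilinear.image_tail {S : Set (Fin (N + 1) → Γ)} (hS : IsSemilinear M S) :
    IsSemilinear M (Fin.tail '' S) := by
  obtain ⟨Ps, hPs, hP, rfl⟩ := hS
  refine ⟨(Fin.tail '' ·) '' Ps, hPs.image _, ?_, image_sUnion.symm⟩
  rintro _ ⟨P, hP', rfl⟩
  exact (hP P hP').image_tail

theorem IsSemilinear.image_last {n : ℕ} {S : Set (Fin (n + 1) → Γ)} (hS : IsSemilinear M S) :
    IsSemilinear M ((fun z => ![z (Fin.last n)]) '' S) := by
  induction n with
  | zero =>
    have : (fun z : Fin 1 → Γ => ![z (Fin.last 0)]) = id := by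
      funext z i
      fin_cases i
      rfl
    rwa [this, image_id]
  | succ n ih =>
    have : (fun z : Fin (n + 2) → Γ => ![z (Fin.last (n + 1))]) =
        (fun y => ![y (Fin.last n)]) ∘ Fin.tail := by
      funext z
      simp [Fin.tail, Fin.succ_last]
    rw [this, image_comp]
    exact ih hS.image_tail

end FourierMotzkin

section Threshold

variable {Γ : Type*} [AddCommGroup Γ] [LinearOrder Γ] [IsOrderedAddMonoid Γ] [Module ℚ Γ]
  {M : Submodule ℚ Γ} {ρ : Γ}

theorem forall_lt_smul_of_forall_lt (hρ : ∀ a ∈ M, a < ρ) {q : ℚ} (hq : 0 < q) :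
    ∀ a ∈ M, a < q • ρ := fun a ha => by
  simpa [smul_smul, hq.ne'] using smul_lt_smul_of_pos_left (hρ _ (M.smul_mem q⁻¹ ha)) hq

open Constraint in
theorem IsPolyhedron.exists_forall_gt_notMem {P : Set (Fin 1 → Γ)} (hP : IsPolyhedron M P)
    (hρ : ∀ a ∈ M, a < ρ) (hρP : ![ρ] ∉ P) : ∃ ν₀ ∈ M, ∀ ν, ν₀ < ν → ![ν] ∉ P := by
  obtain ⟨C, -, hCM, rfl⟩ := hP
  obtain ⟨c, hc, hρc⟩ : ∃ c ∈ C, ¬ c.Holds ![ρ] := by simpa [solutions] using hρP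
  have hb : c.bound ![] ∈ M :=
    M.neg_mem (M.smul_mem _ (by simpa [affineEval_apply, tail] using hCM c hc))
  rcases lt_trichotomy c.lead 0 with h | h | h
  · exact absurd ((holds_cons_iff_of_lead_neg h).2 (leOrLt_of_lt (hρ _ hb))) hρc
  · exact ⟨0, M.zero_mem, fun ν _ hν => hρc <|
      (holds_cons_iff_of_lead_eq_zero h).2 ((holds_cons_iff_of_lead_eq_zero h).1 (hν c hc))⟩
  · exact ⟨c.bound ![], hb, fun ν hν hνP =>
      hν.not_ge ((holds_cons_iff_of_lead_pos h).1 (hνP c hc)).le⟩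

theorem IsSemilinear.exists_forall_gt_notMem {S : Set (Fin 1 → Γ)} (hS : IsSemilinear M S)
    (hρ : ∀ a ∈ M, a < ρ) (hρS : ![ρ] ∉ S) : ∃ ν₀ ∈ M, ∀ ν, ν₀ < ν → ![ν] ∉ S := by
  obtain ⟨Ps, hPs, hP, rfl⟩ := hS
  have : ∀ P ∈ Ps, ∃ ν₀ : M, ∀ ν, (ν₀ : Γ) < ν → ![ν] ∉ P := fun P hP' => by
    obtain ⟨ν₀, hν₀, h⟩ := (hP P hP').exists_forall_gt_notMem hρ fun h => hρS ⟨P, hP', h⟩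
    exact ⟨⟨ν₀, hν₀⟩, h⟩
  choose! f hf using this
  obtain ⟨b, hb⟩ := (hPs.image f).bddAbove
  exact ⟨b, b.2, fun ν hν ⟨P, hP', hνP⟩ =>
    hf P hP' ν ((Subtype.coe_le_coe.2 (hb (mem_image_of_mem f hP'))).trans_lt hν) hνP⟩

end Threshold

section PiecewiseAffine

variable {Γ : Type*} [AddCommGroup Γ] [LinearOrder Γ] [Module ℚ Γ] {N : ℕ}

inductive IsPiecewiseAffineOn (M : Submodule ℚ Γ) :
    Set (Fin N → Γ) → ((Fin N → Γ) → Γ) → Prop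
  | affine {S : Set (Fin N → Γ)} {f : (Fin N → Γ) → Γ} (A : (Fin N → ℚ) × Γ)
      (hS : IsSemilinear M S) (hA : A.2 ∈ M) (hf : ∀ z ∈ S, f z = affineEval z A) :
      IsPiecewiseAffineOn M S f
  | union {S T : Set (Fin N → Γ)} {f : (Fin N → Γ) → Γ} :
      IsPiecewiseAffineOn M S f → IsPiecewiseAffineOn M T f → IsPiecewiseAffineOn M (S ∪ T) f

namespace IsPiecewiseAffineOn

variable {M : Submodule ℚ Γ} {S T : Set (Fin N → Γ)} {f g : (Fin N → Γ) → Γ}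

theorem isSemilinear (h : IsPiecewiseAffineOn M S f) : IsSemilinear M S := by
  induction h with
  | affine _ hS => exact hS
  | union _ _ ihS ihT => exact ihS.union ihT

theorem congr (h : IsPiecewiseAffineOn M S f) (hfg : ∀ z ∈ S, f z = g z) :
    IsPiecewiseAffineOn M S g := by
  induction h with
  | affine A hS hA hf => exact .affine A hS hA fun z hz => (hfg z hz).symm.trans (hf z hz)
  | union _ _ ihS ihT =>
    exact .union (ihS fun z hz => hfg z (.inl hz)) (ihT fun z hz => hfg z (.inr hz))

theorem inter (h : IsPiecewiseAffineOn M S f) (hT : IsSemilinear M T) :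
    IsPiecewiseAffineOn M (S ∩ T) f := by
  induction h with
  | affine A hS hA hf => exact .affine A (hS.inter hT) hA fun z hz => hf z hz.1
  | union _ _ ihS ihT =>
    rw [union_inter_distrib_right]
    exact ihS.union ihT

theorem neg (h : IsPiecewiseAffineOn M S f) : IsPiecewiseAffineOn M S fun z => -f z := by
  induction h with
  | affine A hS hA hf => exact .affine (-A) hS (M.neg_mem hA) fun z hz => by simp [hf z hz]
  | union _ _ ihS ihT => exact ihS.union ihT

theorem map₂_of_affine {op : Γ → Γ → Γ} (hop : ∀ {P : Set (Fin N → Γ)} (A B : (Fin N → ℚ) × Γ),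
      IsSemilinear M P → A.2 ∈ M → B.2 ∈ M →
        IsPiecewiseAffineOn M P fun z => op (affineEval z A) (affineEval z B))
    {A : (Fin N → ℚ) × Γ} (hA : A.2 ∈ M) (hf : ∀ z ∈ S, f z = affineEval z A)
    (hg : IsPiecewiseAffineOn M S g) : IsPiecewiseAffineOn M S fun z => op (f z) (g z) := by
  induction hg with
  | affine B hS hB hg => exact (hop A B hS hA hB).congr fun z hz => by rw [hf z hz, hg z hz]
  | union _ _ ihS ihT =>
    exact (ihS fun z hz => hf z (.inl hz)).union (ihT fun z hz => hf z (.inr hz))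

theorem map₂ {op : Γ → Γ → Γ} (hop : ∀ {P : Set (Fin N → Γ)} (A B : (Fin N → ℚ) × Γ),
      IsSemilinear M P → A.2 ∈ M → B.2 ∈ M →
        IsPiecewiseAffineOn M P fun z => op (affineEval z A) (affineEval z B))
    (hf : IsPiecewiseAffineOn M S f) (hg : IsPiecewiseAffineOn M S g) :
    IsPiecewiseAffineOn M S fun z => op (f z) (g z) := by
  induction hf generalizing g with
  | affine A _ hA hf => exact map₂_of_affine hop hA hf hg
  | union hfS hfT ihS ihT =>
    have hgS := hg.inter hfS.isSemilinear
    have hgT := hg.inter hfT.isSemilinear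
    rw [union_inter_cancel_left] at hgS
    rw [union_inter_cancel_right] at hgT
    exact (ihS hgS).union (ihT hgT)

theorem add (hf : IsPiecewiseAffineOn M S f) (hg : IsPiecewiseAffineOn M S g) :
    IsPiecewiseAffineOn M S fun z => f z + g z :=
  map₂ (fun A B hP hA hB => .affine (A + B) hP (M.add_mem hA hB) fun _ _ => (map_add _ _ _).symm)
    hf hg

theorem sub (hf : IsPiecewiseAffineOn M S f) (hg : IsPiecewiseAffineOn M S g) :
    IsPiecewiseAffineOn M S fun z => f z - g z :=
  map₂ (fun A B hP hA hB => .affine (A - B) hP (M.sub_mem hA hB) fun _ _ => (map_sub _ _ _).symm)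
    hf hg

variable [IsOrderedAddMonoid Γ]

theorem max_affineEval {A B : (Fin N → ℚ) × Γ} (hS : IsSemilinear M S) (hA : A.2 ∈ M)
    (hB : B.2 ∈ M) : IsPiecewiseAffineOn M S fun z => max (affineEval z A) (affineEval z B) := by
  have h := (affine B (hS.sep_holds (c := ⟨A - B, false⟩) (M.sub_mem hA hB)) hB
    fun z hz => max_eq_right ((Constraint.holds_sub_iff.1 hz.2).le)).union
    (affine A (hS.sep_holds (c := ⟨B - A, true⟩) (M.sub_mem hB hA)) hA
    fun z hz => max_eq_left ((Constraint.holds_sub_iff.1 hz.2).le))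
  rwa [← sep_or, sep_eq_self_iff_mem_true.2 fun z _ => by
    simpa only [Constraint.holds_sub_iff, leOrLt_false, leOrLt_true] using le_or_gt _ _] at h

theorem max (hf : IsPiecewiseAffineOn M S f) (hg : IsPiecewiseAffineOn M S g) :
    IsPiecewiseAffineOn M S fun z => max (f z) (g z) :=
  map₂ (fun _ _ hP hA hB => max_affineEval hP hA hB) hf hg

theorem min (hf : IsPiecewiseAffineOn M S f) (hg : IsPiecewiseAffineOn M S g) :
    IsPiecewiseAffineOn M S fun z => min (f z) (g z) :=
  (hf.neg.max hg.neg).neg.congr fun z _ => by rw [max_neg_neg, neg_neg]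

theorem isSemilinear_sep_ne_zero (h : IsPiecewiseAffineOn M S f) :
    IsSemilinear M {z ∈ S | f z ≠ 0} := by
  induction h with
  | @affine S f A hS hA hf =>
    convert (hS.sep_holds (c := ⟨A, true⟩) hA).union
      (hS.sep_holds (c := ⟨-A, true⟩) (M.neg_mem hA)) using 1
    ext z
    by_cases hz : z ∈ S <;> simp [hz, hf, Constraint.Holds, lt_or_lt_iff_ne]
  | union _ _ ihS ihT =>
    convert ihS.union ihT using 1
    exact sep_union

theorem isSemilinear_sep_ne (hf : IsPiecewiseAffineOn M S f) (hg : IsPiecewiseAffineOn M S g) :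
    IsSemilinear M {z ∈ S | f z ≠ g z} := by
  simpa only [sub_ne_zero] using (hf.sub hg).isSemilinear_sep_ne_zero

end IsPiecewiseAffineOn

theorem MMTerm.isPiecewiseAffineOn_eval [IsOrderedAddMonoid Γ] {M : Submodule ℚ Γ} {p : ℕ}
    {S : Set (Fin N → Γ)} (hS : IsSemilinear M S) {g : Fin p → (Fin N → Γ) → Γ}
    (hg : ∀ i, IsPiecewiseAffineOn M S (g i)) {t : MMTerm Γ p} (ht : t.ConstsIn (M : Set Γ)) :
    IsPiecewiseAffineOn M S fun z => t.eval fun i => g i z := by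
  induction t with
  | const c => exact .affine (0, c) hS ht fun z _ => by simp [MMTerm.eval, affineEval_apply]
  | var i => exact hg i
  | add t s iht ihs => exact (iht ht.1).add (ihs ht.2)
  | neg t iht => exact (iht ht).neg
  | min t s iht ihs => exact (iht ht.1).min (ihs ht.2)
  | max t s iht ihs => exact (iht ht.1).max (ihs ht.2)

end PiecewiseAffine

section Encoding

variable {Γ : Type*} [AddCommGroup Γ] [LinearOrder Γ] [IsOrderedAddMonoid Γ] [Module ℚ Γ]
  {M : Submodule ℚ Γ} {n : ℕ}

theorem isPolyhedron_setOf_init_mem_cellSet {s : Finset ((Fin n → ℚ) × Γ × Bool)}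
    (hs : ∀ p ∈ s, p.2.1 ∈ M) :
    IsPolyhedron M {z : Fin (n + 1) → Γ | Fin.init z ∈ cellSet id s} := by
  convert isPolyhedron_setOf_forall
    (fun p : s => (⟨(Fin.snoc p.1.1 0, -p.1.2.1), p.1.2.2⟩ : Constraint Γ (n + 1)))
    (fun p => M.neg_mem (hs p.1 p.2)) using 1
  ext z
  simp only [Constraint.Holds, affineEval_snoc, zero_smul, add_zero]
  simp only [cellSet, affineEval_apply, ← sub_eq_add_neg, leOrLt_sub_zero, mem_ofPred_eq,
    Subtype.forall]
  rfl

theorem isPolyhedron_box (m : ℕ) :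
    IsPolyhedron M {z : Fin (n + 1) → Γ | ∀ j, |Fin.init z j| ≤ m • z (Fin.last n)} := by
  convert isPolyhedron_setOf_forall (fun p : Fin n × Bool => (⟨(Fin.snoc
    (Pi.single p.1 (if p.2 then 1 else -1)) (-(m : ℚ)), 0), false⟩ : Constraint Γ (n + 1)))
    (fun _ => M.zero_mem) using 1
  ext z
  simp [Constraint.Holds, affineEval_snoc, affineEval_single, abs_le', Prod.forall, forall_and,
    ← sub_eq_add_neg, Nat.cast_smul_eq_nsmul, and_comm]

theorem isSemilinear_setOf_eval_ne {th : MMTerm Γ n} {t : MMTerm Γ (n + 1)}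
    (hth : th.ConstsIn (M : Set Γ)) (ht : t.ConstsIn (M : Set Γ)) (k : ℤ) {β : Γ} (hβ : β ∈ M) :
    IsSemilinear M {z : Fin (n + 1) → Γ |
      th.eval (Fin.init z) ≠ t.eval (Fin.snoc (Fin.init z) (k • z (Fin.last n) + β))} := by
  have hcoord (j : Fin (n + 1)) : IsPiecewiseAffineOn M univ fun z : Fin (n + 1) → Γ => z j :=
    .affine (Pi.single j 1, 0) isSemilinear_univ M.zero_mem fun z _ => by simp [affineEval_single]
  have hlast : IsPiecewiseAffineOn M univ fun z : Fin (n + 1) → Γ => k • z (Fin.last n) + β :=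
    .affine (Pi.single (Fin.last n) k, β) isSemilinear_univ hβ fun z _ => by
      simp [affineEval_single, Int.cast_smul_eq_zsmul]
  have h₁ := th.isPiecewiseAffineOn_eval isSemilinear_univ (fun i => hcoord i.castSucc) hth
  have h₂ := t.isPiecewiseAffineOn_eval isSemilinear_univ
    (g := fun i z => Fin.snoc (Fin.init z) (k • z (Fin.last n) + β) i) (fun i => by
      refine Fin.lastCases ?_ (fun j => ?_) i
      · simpa using hlast
      · simpa [Fin.init] using hcoord j.castSucc) ht
  have h := h₁.isSemilinear_sep_ne h₂
  simp only [mem_univ, true_and] at h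
  exact h

def failureSet {kc : ℕ} (cells : Fin kc → Finset ((Fin n → ℚ) × Γ × Bool)) (th : MMTerm Γ n)
    (t : MMTerm Γ (n + 1)) (m : ℕ) (k : ℤ) (β : Γ) : Set (Fin (n + 1) → Γ) :=
  {z | Fin.init z ∈ ⋃ i, cellSet id (cells i) ∧ (∀ j, |Fin.init z j| ≤ m • z (Fin.last n)) ∧
    th.eval (Fin.init z) ≠ t.eval (Fin.snoc (Fin.init z) (k • z (Fin.last n) + β))}

variable {kc : ℕ} {cells : Fin kc → Finset ((Fin n → ℚ) × Γ × Bool)} {th : MMTerm Γ n}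
  {t : MMTerm Γ (n + 1)} {m : ℕ} {k : ℤ} {β : Γ}

theorem snoc_mem_failureSet {x : Fin n → Γ} {ν : Γ} :
    Fin.snoc x ν ∈ failureSet cells th t m k β ↔ x ∈ ⋃ i, cellSet id (cells i) ∧
      (∀ j, |x j| ≤ m • ν) ∧ th.eval x ≠ t.eval (Fin.snoc x (k • ν + β)) := by
  simp [failureSet]

theorem isSemilinear_failureSet (hcells : ∀ i, ∀ p ∈ cells i, p.2.1 ∈ M)
    (hth : th.ConstsIn (M : Set Γ)) (ht : t.ConstsIn (M : Set Γ)) (hβ : β ∈ M) :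
    IsSemilinear M (failureSet cells th t m k β) := by
  have hcell := IsSemilinear.iUnion fun i =>
    (isPolyhedron_setOf_init_mem_cellSet (hcells i)).isSemilinear
  convert hcell.inter ((isPolyhedron_box m).isSemilinear.inter
    (isSemilinear_setOf_eval_ne hth ht k hβ)) using 1
  ext z
  simp [failureSet]

end Encoding

theorem exists_eq_rat_smul_add_of_mem_closure {G : Type*} [AddCommGroup G] [Module ℚ G]
    {M : AddSubgroup G} {ρ γ : G}
    (hγ : γ ∈ AddSubgroup.closure ((M : Set G) ∪ {x | ∃ q : ℚ, x = q • ρ})) :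
    ∃ q : ℚ, ∃ β ∈ M, γ = q • ρ + β := by
  induction hγ using AddSubgroup.closure_induction with
  | mem x hx =>
    rcases hx with hx | ⟨q, rfl⟩
    exacts [⟨0, x, hx, by simp⟩, ⟨q, 0, M.zero_mem, by simp⟩]
  | zero => exact ⟨0, 0, M.zero_mem, by simp⟩
  | add x y _ _ hx hy =>
    obtain ⟨q, β, hβ, rfl⟩ := hx
    obtain ⟨q', β', hβ', rfl⟩ := hy
    exact ⟨q + q', β + β', M.add_mem hβ hβ', by rw [add_smul]; abel⟩
  | neg x _ hx =>
    obtain ⟨q, β, hβ, rfl⟩ := hx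
    exact ⟨-q, -β, M.neg_mem hβ, by rw [neg_smul]; abel⟩

/-- Let `Γ` be a divisible ordered abelian group, `M ⊆ Γ` a divisible
subgroup and `ρ ∈ Γ` with `ρ > M`.  (1) Every `γ` in the subgroup generated by `M`
and the rational multiples of `ρ` can be written `γ = (k/m)·ρ + β` with `m > 0`,
`k ∈ ℤ`, `β ∈ M`.  (2) (Transfer) If an identity `h = t(x_1,…,x_n, k·ν + β)` between
`M`-definable functions (encoded by terms and semilinear sets with constants in `M`)
holds on the box `[−m·ν, m·ν]^n` for `ν = ρ/m`, then there is `ν₀ ∈ M` such that the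
identity holds on `[−m·ν, m·ν]^n` for all `ν > ν₀` in `M`. -/
theorem stmt_15 {Γ : Type*} [AddCommGroup Γ] [LinearOrder Γ] [IsOrderedAddMonoid Γ] [Module ℚ Γ]
    (M : AddSubgroup Γ) (hMdiv : ∀ (q : ℚ), ∀ a ∈ M, q • a ∈ M)
    (ρ : Γ) (hρ : ∀ a ∈ M, a < ρ) :
    (∀ γ ∈ AddSubgroup.closure ((M : Set Γ) ∪ {x | ∃ q : ℚ, x = q • ρ}),
      ∃ (m : ℕ) (k : ℤ) (β : Γ), 0 < m ∧ β ∈ M ∧ γ = ((k : ℚ) / (m : ℚ)) • ρ + β) ∧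
    (∀ (n kc : ℕ) (cells : Fin kc → Finset ((Fin n → ℚ) × Γ × Bool)),
      (∀ i, ∀ p ∈ cells i, p.2.1 ∈ M) →
      ∀ (th : MMTerm Γ n) (t : MMTerm Γ (n + 1)),
      th.ConstsIn (M : Set Γ) → t.ConstsIn (M : Set Γ) →
      ∀ (m : ℕ) (k : ℤ) (β : Γ), 0 < m → β ∈ M →
      (∀ x ∈ ⋃ i, cellSet (id : Γ → Γ) (cells i),
        (∀ j, |x j| ≤ ρ) →
        th.eval x = t.eval (Fin.snoc x (k • (((1 : ℚ) / (m : ℚ)) • ρ) + β))) →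
      ∃ ν₀ ∈ M, ∀ ν ∈ M, ν₀ < ν →
        ∀ x ∈ ⋃ i, cellSet (id : Γ → Γ) (cells i),
          (∀ j, |x j| ≤ m • ν) →
          th.eval x = t.eval (Fin.snoc x (k • ν + β))) := by
  refine ⟨fun γ hγ => ?_, fun n kc cells hcells th t hth ht m k β hm hβ H => ?_⟩
  · obtain ⟨q, β, hβ, rfl⟩ := exists_eq_rat_smul_add_of_mem_closure hγ
    exact ⟨q.den, q.num, β, q.den_pos, hβ, by rw [Rat.num_div_den]⟩
  let Mℚ : Submodule ℚ Γ := { M with smul_mem' := hMdiv }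
  have : Nontrivial Γ := ⟨⟨0, ρ, (hρ 0 M.zero_mem).ne⟩⟩
  set ν₁ : Γ := ((1 : ℚ) / m) • ρ
  have hmν₁ : m • ν₁ = ρ := by
    rw [← Nat.cast_smul_eq_nsmul ℚ, smul_smul, mul_one_div_cancel (by positivity), one_smul]
  have hν₁F : ![ν₁] ∉ (fun z => ![z (Fin.last n)]) '' failureSet cells th t m k β := by
    rintro ⟨z, hz, hzν₁⟩
    obtain ⟨x, ν, rfl⟩ : ∃ x ν, z = Fin.snoc x ν :=
      ⟨Fin.init z, z (Fin.last n), (Fin.snoc_init_self z).symm⟩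
    obtain rfl : ν = ν₁ := by simpa using hzν₁
    obtain ⟨hx, hbox, hne⟩ := snoc_mem_failureSet.1 hz
    exact hne (H x hx fun j => hmν₁ ▸ hbox j)
  obtain ⟨ν₀, hν₀, hfail⟩ := (isSemilinear_failureSet (M := Mℚ) hcells hth ht
    hβ).image_last.exists_forall_gt_notMem
    (forall_lt_smul_of_forall_lt (M := Mℚ) hρ (by positivity)) hν₁F
  exact ⟨ν₀, hν₀, fun ν _ hν x hx hbox => not_not.1 fun hne =>
    hfail ν hν ⟨Fin.snoc x ν, snoc_mem_failureSet.2 ⟨hx, hbox, hne⟩, by simp⟩⟩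
end
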